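/- Assume (A1), (A2) and (A3). Then μ is reducible if and only if p_{i,j} + p_{i,j⁺} = p_{i⁺,j⁺} for every (i,j) ∈ 𝒮₂. -/

import Mathlib

open scoped Classical ENNReal
open Filter MeasureTheory

noncomputable section

namespace MTM

/-- the edge relation of the directed graph `𝒢`: `(i,j) ∈ G₂ ↔ p i j > 0`. -/
def edge (p : ℕ → ℕ → ℝ) (i j : ℕ) : Prop := 0 < p i j

/-- product of transition weights along a word. -/
def pword (p : ℕ → ℕ → ℝ) : List ℕ → ℝ
  | [] => 1
  | [_] => 1
  | a :: b :: t => p a b * pword p (b :: t)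

/-- product of contraction ratios along a word. -/
def sword (sr : ℕ → ℕ → ℝ) : List ℕ → ℝ
  | [] => 1
  | [_] => 1
  | a :: b :: t => sr a b * sword sr (b :: t)

/-- `𝒯(σ)`: all lifts of a word, each letter `i` may be replaced by `i + N`. -/
def lifts (N : ℕ) : List ℕ → Finset (List ℕ)
  | [] => {[]}
  | i :: t => (lifts N t).biUnion fun l => {i :: l, (i + N) :: l}

/-- `Γ(σ) = G_n ∩ 𝒯(σ)`. -/
def Gam (p : ℕ → ℕ → ℝ) (N : ℕ) (σ : List ℕ) : Finset (List ℕ) :=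
  (lifts N σ).filter fun τ => τ.Chain' (edge p)

/-- words over the alphabet `Ψ = {1,…,N}`. -/
def isPsiWord (N : ℕ) (σ : List ℕ) : Prop :=
  σ ≠ [] ∧ ∀ x ∈ σ, x ∈ Finset.Icc 1 N

/-- `σ ∈ 𝒮_*`: a `Ψ`-word having at least one admissible lift. -/
def isSword (p : ℕ → ℕ → ℝ) (N : ℕ) (σ : List ℕ) : Prop :=
  isPsiWord N σ ∧ (Gam p N σ).Nonempty

/-- `σ ∈ G_*`: admissible words over `Ω = {1,…,2N}`. -/
def isGword (p : ℕ → ℕ → ℝ) (N : ℕ) (σ : List ℕ) : Prop :=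
  σ ≠ [] ∧ (∀ x ∈ σ, x ∈ Finset.Icc 1 (2 * N)) ∧ σ.Chain' (edge p)

/-- `σ ∈ H₁^*`: admissible words with all letters in `Ψ`. -/
def isH1word (p : ℕ → ℕ → ℝ) (N : ℕ) (σ : List ℕ) : Prop :=
  σ ≠ [] ∧ (∀ x ∈ σ, x ∈ Finset.Icc 1 N) ∧ σ.Chain' (edge p)

/-- `σ ∈ H₂^*`: admissible words with all letters in `Υ = {N+1,…,2N}`. -/
def isH2word (p : ℕ → ℕ → ℝ) (N : ℕ) (σ : List ℕ) : Prop :=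
  σ ≠ [] ∧ (∀ x ∈ σ, x ∈ Finset.Icc (N + 1) (2 * N)) ∧ σ.Chain' (edge p)

/-- `μ(J_σ) = Σ_{σ̃ ∈ Γ(σ)} χ_{σ̃₁} p_{σ̃}`. -/
def muJ (p : ℕ → ℕ → ℝ) (χ : ℕ → ℝ) (N : ℕ) (σ : List ℕ) : ℝ :=
  ∑ τ ∈ Gam p N σ, χ (τ.headD 0) * pword p τ

/-- `ℰ_r(σ) = μ(J_σ) s_σ^r`, with `ℰ_r(θ) = 1` for the empty word. -/
def Er (p : ℕ → ℕ → ℝ) (χ : ℕ → ℝ) (sr : ℕ → ℕ → ℝ) (N : ℕ) (r : ℝ) (σ : List ℕ) : ℝ :=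
  if σ = [] then 1 else muJ p χ N σ * sword sr σ ^ r

/-- `I_{1,σ}` resp. `I_{2,σ}`: the part of `μ(J_σ)` coming from lifts ending with `i`
(resp. with `i⁺`, when applied with `i + N`). -/
def Ipart (p : ℕ → ℕ → ℝ) (χ : ℕ → ℝ) (N : ℕ) (i : ℕ) (σ : List ℕ) : ℝ :=
  ∑ τ ∈ (Gam p N σ).filter (fun τ => τ.getLastD 0 = i), χ (τ.headD 0) * pword p τ

/-- all words of a given length over a finite alphabet. -/
def wordsOfLen (S : Finset ℕ) : ℕ → Finset (List ℕ)
  | 0 => {[]}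
  | n + 1 => (wordsOfLen S n).biUnion fun l => S.image fun a => a :: l

/-- `𝒮_n` as a finite set of words. -/
def Sn (p : ℕ → ℕ → ℝ) (N n : ℕ) : Finset (List ℕ) :=
  (wordsOfLen (Finset.Icc 1 N) n).filter (isSword p N)

/-- irreducibility of the sub-matrix of `p` indexed by `S`: the corresponding directed
graph is strongly connected. -/
def irreducibleOn (p : ℕ → ℕ → ℝ) (S : Finset ℕ) : Prop :=
  ∀ i ∈ S, ∀ j ∈ S, ∃ c : List ℕ, (∀ x ∈ c, x ∈ S) ∧ List.Chain (edge p) i (c ++ [j])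

/-- Assumption (A1): `P₁, P₂` irreducible and `P₄ = 0`. -/
def A1 (p : ℕ → ℕ → ℝ) (N : ℕ) : Prop :=
  irreducibleOn p (Finset.Icc 1 N) ∧
    irreducibleOn (fun a b => p (a + N) (b + N)) (Finset.Icc 1 N) ∧
    ∀ i ∈ Finset.Icc 1 N, ∀ j ∈ Finset.Icc 1 N, p (i + N) j = 0

/-- Assumption (A2). -/
def A2 (p : ℕ → ℕ → ℝ) (N : ℕ) : Prop :=
  ∀ i ∈ Finset.Icc 1 N,
    2 ≤ ((Finset.Icc 1 N).filter fun j => 0 < p i j).card ∧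
      2 ≤ ((Finset.Icc 1 N).filter fun j => 0 < p (i + N) (j + N)).card

/-- Assumption (A3): `ℳ_{i,j} = ∅` or `ℳ_{i,j} = {(i,j),(i,j⁺),(i⁺,j⁺)}`. -/
def A3 (p : ℕ → ℕ → ℝ) (N : ℕ) : Prop :=
  ∀ i ∈ Finset.Icc 1 N, ∀ j ∈ Finset.Icc 1 N,
    (p i j = 0 ∧ p i (j + N) = 0 ∧ p (i + N) j = 0 ∧ p (i + N) (j + N) = 0) ∨
      (0 < p i j ∧ 0 < p i (j + N) ∧ p (i + N) j = 0 ∧ 0 < p (i + N) (j + N))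

/-- Assumption (A4): `ℳ_{i,j} = ∅` or `ℳ_{i,j} = 𝒩_{i,j}`. -/
def A4 (p : ℕ → ℕ → ℝ) (N : ℕ) : Prop :=
  ∀ i ∈ Finset.Icc 1 N, ∀ j ∈ Finset.Icc 1 N,
    (p i j = 0 ∧ p i (j + N) = 0 ∧ p (i + N) j = 0 ∧ p (i + N) (j + N) = 0) ∨
      (0 < p i j ∧ 0 < p i (j + N) ∧ 0 < p (i + N) j ∧ 0 < p (i + N) (j + N))

/-- Assumption (A5): `P₁` is irreducible. -/
def A5 (p : ℕ → ℕ → ℝ) (N : ℕ) : Prop := irreducibleOn p (Finset.Icc 1 N)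

/-- `T_σ = T_{σ₁σ₂} ∘ ⋯ ∘ T_{σ_{n-1}σ_n}` (identity for words of length `≤ 1`). -/
def Tword {E : Type*} (T : ℕ → ℕ → E → E) : List ℕ → E → E
  | [], x => x
  | [_], x => x
  | a :: b :: t, x => T a b (Tword T (b :: t) x)

/-- the cylinder set `J_σ = T_σ (J_{σ_n})`. -/
def Jword {E : Type*} (T : ℕ → ℕ → E → E) (J : ℕ → Set E) (σ : List ℕ) : Set E :=
  Tword T σ '' J (σ.getLastD 0)

/-- the Mauldin–Williams fractal `K = ⋂_k ⋃_{σ ∈ G_k} J_σ`. -/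
def attractor {E : Type*} (p : ℕ → ℕ → ℝ) (N : ℕ) (T : ℕ → ℕ → E → E) (J : ℕ → Set E) :
    Set E :=
  ⋂ n : ℕ, ⋃ σ ∈ {σ : List ℕ | isGword p N σ ∧ σ.length = n + 1}, Jword T J σ

/-- `μ` is reducible: `μ = ν₁ ∘ π₁⁻¹` for the Markov-type measure `ν₁` associated with some
`N × N` row-stochastic matrix and positive probability vector; equivalently, the cylinder
values of `μ` are of Markov type. -/
def reducible {E : Type*} [MeasurableSpace E] (p : ℕ → ℕ → ℝ) (N : ℕ)
    (T : ℕ → ℕ → E → E) (J : ℕ → Set E) (μ : Measure E) : Prop :=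
  ∃ (pt : ℕ → ℕ → ℝ) (χt : ℕ → ℝ),
    (∀ i ∈ Finset.Icc 1 N, ∀ j ∈ Finset.Icc 1 N, 0 ≤ pt i j) ∧
      (∀ i ∈ Finset.Icc 1 N, ∑ j ∈ Finset.Icc 1 N, pt i j = 1) ∧
      (∀ i ∈ Finset.Icc 1 N, 0 < χt i) ∧
      (∑ i ∈ Finset.Icc 1 N, χt i = 1) ∧
      ∀ σ : List ℕ, isSword p N σ →
        μ (Jword T J σ) = ENNReal.ofReal (χt (σ.headD 0) * pword pt σ)

/-- `e^r_{k,r}(μ)`: the `k`-th quantization error of order `r`, to the `r`-th power. -/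
def quantErr {E : Type*} [PseudoMetricSpace E] [MeasurableSpace E] (r : ℝ) (μ : Measure E)
    (k : ℕ) : ℝ :=
  sInf ((fun α : Set E => ∫ x, Metric.infDist x α ^ r ∂μ) ''
    {α : Set E | α.Nonempty ∧ α.Finite ∧ α.ncard ≤ k})

/-- the upper quantization coefficient `Q̄_r^s(μ) = limsup_k k^{r/s} e^r_{k,r}(μ)`. -/
def upperQC {E : Type*} [PseudoMetricSpace E] [MeasurableSpace E] (r s : ℝ)
    (μ : Measure E) : ℝ≥0∞ :=
  limsup (fun k : ℕ => ENNReal.ofReal ((k : ℝ) ^ (r / s) * quantErr r μ k)) atTop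

/-- the lower quantization coefficient `Q̲_r^s(μ)`. -/
def lowerQC {E : Type*} [PseudoMetricSpace E] [MeasurableSpace E] (r s : ℝ)
    (μ : Measure E) : ℝ≥0∞ :=
  liminf (fun k : ℕ => ENNReal.ofReal ((k : ℝ) ^ (r / s) * quantErr r μ k)) atTop

/-- the upper quantization dimension `D̄_r(μ) = limsup_k log k / (-log e_{k,r}(μ))`. -/
def upperQD {E : Type*} [PseudoMetricSpace E] [MeasurableSpace E] (r : ℝ)
    (μ : Measure E) : ℝ :=
  limsup (fun k : ℕ => Real.log k / (-Real.log (quantErr r μ k ^ (1 / r)))) atTop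

/-- the lower quantization dimension `D̲_r(μ)`. -/
def lowerQD {E : Type*} [PseudoMetricSpace E] [MeasurableSpace E] (r : ℝ)
    (μ : Measure E) : ℝ :=
  liminf (fun k : ℕ => Real.log k / (-Real.log (quantErr r μ k ^ (1 / r)))) atTop

/-- spectral radius of a real matrix: the largest modulus of a complex eigenvalue. -/
def specRad {n : Type*} [Fintype n] [DecidableEq n] (M : Matrix n n ℝ) : ℝ :=
  sSup (norm '' spectrum ℂ (M.map (algebraMap ℝ ℂ)))

/-- `A₁(s) = ((p_{i,j} s_{i,j}^r)^s)_{i,j=1}^N`. -/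
def matA1 (p sr : ℕ → ℕ → ℝ) (N : ℕ) (r s : ℝ) : Matrix (Fin N) (Fin N) ℝ :=
  Matrix.of fun i j => (p (i.1 + 1) (j.1 + 1) * sr (i.1 + 1) (j.1 + 1) ^ r) ^ s

/-- `A₂(s) = ((p_{i⁺,j⁺} s_{i⁺,j⁺}^r)^s)_{i,j=1}^N`. -/
def matA2 (p sr : ℕ → ℕ → ℝ) (N : ℕ) (r s : ℝ) : Matrix (Fin N) (Fin N) ℝ :=
  Matrix.of fun i j => (p (i.1 + 1 + N) (j.1 + 1 + N) * sr (i.1 + 1 + N) (j.1 + 1 + N) ^ r) ^ s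

/-- `A₃(s) = ((p_{i,j⁺} s_{i,j⁺}^r)^s)_{i,j=1}^N`. -/
def matA3 (p sr : ℕ → ℕ → ℝ) (N : ℕ) (r s : ℝ) : Matrix (Fin N) (Fin N) ℝ :=
  Matrix.of fun i j => (p (i.1 + 1) (j.1 + 1 + N) * sr (i.1 + 1) (j.1 + 1 + N) ^ r) ^ s

/-- `A₄(s) = ((p_{i⁺,j} s_{i⁺,j}^r)^s)_{i,j=1}^N`. -/
def matA4 (p sr : ℕ → ℕ → ℝ) (N : ℕ) (r s : ℝ) : Matrix (Fin N) (Fin N) ℝ :=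
  Matrix.of fun i j => (p (i.1 + 1 + N) (j.1 + 1) * sr (i.1 + 1 + N) (j.1 + 1) ^ r) ^ s

/-- the block matrix `A(s) = [[A₁(s), A₃(s)], [A₄(s), A₂(s)]]`. -/
def matA (p sr : ℕ → ℕ → ℝ) (N : ℕ) (r s : ℝ) :
    Matrix (Fin N ⊕ Fin N) (Fin N ⊕ Fin N) ℝ :=
  Matrix.fromBlocks (matA1 p sr N r s) (matA3 p sr N r s) (matA4 p sr N r s) (matA2 p sr N r s)

/-- `p̲ = min_{(i,j) ∈ G₂} p_{i,j}`. -/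
def pMin (p : ℕ → ℕ → ℝ) (N : ℕ) : ℝ :=
  sInf {x | ∃ i ∈ Finset.Icc 1 (2 * N), ∃ j ∈ Finset.Icc 1 (2 * N), 0 < p i j ∧ x = p i j}

/-- `p̄ = max_{(i,j) ∈ G₂} p_{i,j}`. -/
def pMax (p : ℕ → ℕ → ℝ) (N : ℕ) : ℝ :=
  sSup {x | ∃ i ∈ Finset.Icc 1 (2 * N), ∃ j ∈ Finset.Icc 1 (2 * N), 0 < p i j ∧ x = p i j}

/-- `s̲ = min_{(i,j) ∈ 𝒮₂} s_{i,j}`. -/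
def sMin (p sr : ℕ → ℕ → ℝ) (N : ℕ) : ℝ :=
  sInf {x | ∃ i ∈ Finset.Icc 1 N, ∃ j ∈ Finset.Icc 1 N, isSword p N [i, j] ∧ x = sr i j}

/-- `s̄ = max_{(i,j) ∈ 𝒮₂} s_{i,j}`. -/
def sMax (p sr : ℕ → ℕ → ℝ) (N : ℕ) : ℝ :=
  sSup {x | ∃ i ∈ Finset.Icc 1 N, ∃ j ∈ Finset.Icc 1 N, isSword p N [i, j] ∧ x = sr i j}

/-- `χ̲ = min_{1 ≤ i ≤ 2N} χ_i`. -/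
def chiMin (χ : ℕ → ℝ) (N : ℕ) : ℝ := sInf {x | ∃ i ∈ Finset.Icc 1 (2 * N), x = χ i}

/-- `χ̄ = max_{1 ≤ i ≤ 2N} χ_i`. -/
def chiMax (χ : ℕ → ℝ) (N : ℕ) : ℝ := sSup {x | ∃ i ∈ Finset.Icc 1 (2 * N), x = χ i}

/-- `t` satisfies the defining property of `t_r`:
`(1/n) log Σ_{σ ∈ 𝒮_n} ℰ_r(σ)^{t/(t+r)} → 0`. -/
def trCond (p : ℕ → ℕ → ℝ) (χ : ℕ → ℝ) (sr : ℕ → ℕ → ℝ) (N : ℕ) (r t : ℝ) : Prop :=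
  0 < t ∧
    Tendsto (fun n : ℕ => (n : ℝ)⁻¹ *
      Real.log (∑ σ ∈ Sn p N n, Er p χ sr N r σ ^ (t / (t + r)))) atTop (nhds 0)

/-- the initial word of length `n` of an infinite sequence. -/
def seqTake (x : ℕ → ℕ) (n : ℕ) : List ℕ := (List.range n).map x

/-- `Γ` is a finite maximal antichain among the words satisfying `W`, with respect to the
infinite sequences satisfying `Wseq`. -/
def isMaxAntichain (W : List ℕ → Prop) (Wseq : (ℕ → ℕ) → Prop) (Γ : Finset (List ℕ)) : Prop :=
  (∀ σ ∈ Γ, W σ) ∧ (∀ σ ∈ Γ, ∀ τ ∈ Γ, σ ≠ τ → ¬σ <+: τ) ∧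
    ∀ x : ℕ → ℕ, Wseq x → ∃ n : ℕ, 1 ≤ n ∧ seqTake x n ∈ Γ

/-- infinite admissible sequences with letters in `Ψ`. -/
def isH1seq (p : ℕ → ℕ → ℝ) (N : ℕ) (x : ℕ → ℕ) : Prop :=
  (∀ n, x n ∈ Finset.Icc 1 N) ∧ ∀ n, 0 < p (x n) (x (n + 1))

/-- infinite admissible sequences with letters in `Υ`. -/
def isH2seq (p : ℕ → ℕ → ℝ) (N : ℕ) (x : ℕ → ℕ) : Prop :=
  (∀ n, x n ∈ Finset.Icc (N + 1) (2 * N)) ∧ ∀ n, 0 < p (x n) (x (n + 1))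

/-- minimal length of a word in `Γ`. -/
def minLen (Γ : Finset (List ℕ)) : ℕ := sInf {n | ∃ σ ∈ Γ, σ.length = n}

/-- maximal length of a word in `Γ`. -/
def maxLen (Γ : Finset (List ℕ)) : ℕ := sSup {n | ∃ σ ∈ Γ, σ.length = n}

/-- `Λ_{k,r} = {σ ∈ 𝒮^* : ℰ_r(σ) < c₁^k ≤ ℰ_r(σ^♭)}`. -/
def LamSet (p : ℕ → ℕ → ℝ) (χ : ℕ → ℝ) (sr : ℕ → ℕ → ℝ) (N : ℕ) (r c1 : ℝ) (k : ℕ) :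
    Set (List ℕ) :=
  {σ | isSword p N σ ∧ Er p χ sr N r σ < c1 ^ k ∧ c1 ^ k ≤ Er p χ sr N r σ.dropLast}

/-- `ℒ(σ) = {σ, σ⁺} ∪ {σ|_h ∗ (σ_{h+1}⁺, …, σ_n⁺) : 1 ≤ h ≤ n − 1}`. -/
def Lset (N : ℕ) (σ : List ℕ) : Finset (List ℕ) :=
  (Finset.range (σ.length + 1)).image fun h =>
    σ.take h ++ (σ.drop h).map (fun x => x + N)

/-!
Under (A3) the words of `𝒮*` are exactly the `P₁`-admissible words over `Ψ`, and the lifts of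
`σ = j t` start with `j` or `j⁺`. Splitting `μ(J_σ) = χ_j F(σ) + χ_{j⁺} G(σ)` according to the
first letter of the lift, the weights satisfy `F(iσ) = p_{i,j} F(σ) + p_{i,j⁺} G(σ)` and
`G(iσ) = p_{i⁺,j⁺} G(σ)`. If `p_{i,j} + p_{i,j⁺} = p_{i⁺,j⁺}` on all edges, then `F = G` is the
`P₂`-weight of `σ`, so `μ` is Markov with matrix `P₂` and initial vector `χ_i + χ_{i⁺}`.

Conversely, if `μ` is Markov then `μ(J_{ijt}) / μ(J_{jt})` does not depend on `t`. This forces,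
for each edge `(i,j)`, either `F = G` on all words starting with `j`, or a degenerate relation
between `χ` and `P`. Agreement at one letter yields the condition on its row and propagates along
edges, hence everywhere by irreducibility of `P₁`. If instead the degenerate relation held on
every edge, `v_k = 1 + χ_{k⁺} / χ_k` would be a positive fixed vector of `P₁`, whose rows all sum
to less than `1`: impossible.
-/

lemma sum_Icc_one_two_mul {M : Type*} [AddCommMonoid M] (f : ℕ → M) (N : ℕ) :
    ∑ x ∈ Finset.Icc 1 (2 * N), f x =
      ∑ x ∈ Finset.Icc 1 N, f x + ∑ x ∈ Finset.Icc 1 N, f (x + N) := by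
  have hshift : ∑ x ∈ Finset.Icc 1 N, f (x + N) = ∑ x ∈ Finset.Icc (N + 1) (N + N), f x := by
    rw [add_comm N 1, ← Finset.map_add_right_Icc, Finset.sum_map]
    rfl
  rw [hshift, two_mul, Finset.Icc_add_one_left_eq_Ioc, ← zero_add 1,
    Finset.Icc_add_one_left_eq_Ioc, Finset.Icc_add_one_left_eq_Ioc,
    Finset.sum_Ioc_consecutive _ (Nat.zero_le N) (Nat.le_add_right N N)]

lemma exists_sum_mul_lt_of_forall_sum_lt_one {ι : Type*} {s : Finset ι} (hs : s.Nonempty)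
    {a : ι → ι → ℝ} {v : ι → ℝ} (ha : ∀ k ∈ s, ∀ l ∈ s, 0 ≤ a k l)
    (hrow : ∀ k ∈ s, ∑ l ∈ s, a k l < 1) (hv : ∀ k ∈ s, 0 < v k) :
    ∃ k ∈ s, ∑ l ∈ s, a k l * v l < v k := by
  obtain ⟨m, hm, hmax⟩ := s.exists_max_image v hs
  refine ⟨m, hm, ?_⟩
  calc ∑ l ∈ s, a m l * v l ≤ ∑ l ∈ s, a m l * v m :=
        Finset.sum_le_sum fun l hl => mul_le_mul_of_nonneg_left (hmax l hl) (ha m hm l hl)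
    _ = (∑ l ∈ s, a m l) * v m := (Finset.sum_mul _ _ _).symm
    _ < 1 * v m := mul_lt_mul_of_pos_right (hrow m hm) (hv m hm)
    _ = v m := one_mul _

lemma irreducibleOn.forall_of_edge_imp {p : ℕ → ℕ → ℝ} {S : Finset ℕ} (h : irreducibleOn p S)
    {P : ℕ → Prop} (hP : ∀ i ∈ S, ∀ j ∈ S, edge p i j → P i → P j) {i : ℕ} (hi : i ∈ S)
    (hPi : P i) : ∀ j ∈ S, P j := by
  intro j hj
  obtain ⟨c, hc, hch⟩ := h i hi j hj
  have hch : (i :: (c ++ [j])).IsChain fun x y => edge p x y ∧ y ∈ S :=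
    List.IsChain.imp_of_mem_tail_imp (fun x y _ hy hxy => ⟨hxy, by
      rcases List.mem_append.1 hy with hy | hy
      · exact hc y hy
      · rwa [List.mem_singleton.1 hy]⟩) hch
  exact (hch.cons_induction (fun x => x ∈ S ∧ P x) _
    (fun x y hxy hx => ⟨hxy.2, hP x hx.1 y hxy.2 hxy.1 hx.2⟩) ⟨hi, hPi⟩ j (by simp)).2

section Words

variable {p : ℕ → ℕ → ℝ} {N : ℕ}

lemma mem_lifts_cons {i : ℕ} {σ τ : List ℕ} :
    τ ∈ lifts N (i :: σ) ↔ ∃ l ∈ lifts N σ, τ = i :: l ∨ τ = (i + N) :: l := by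
  simp [lifts]

lemma self_mem_lifts : ∀ σ : List ℕ, σ ∈ lifts N σ
  | [] => by simp [lifts]
  | i :: t => mem_lifts_cons.2 ⟨t, self_mem_lifts t, Or.inl rfl⟩

lemma ne_nil_of_mem_lifts {σ τ : List ℕ} (hσ : σ ≠ []) (h : τ ∈ lifts N σ) : τ ≠ [] := by
  obtain ⟨i, σ, rfl⟩ := List.exists_cons_of_ne_nil hσ
  rcases mem_lifts_cons.1 h with ⟨l, -, rfl | rfl⟩ <;> simp

lemma mem_Gam {σ τ : List ℕ} : τ ∈ Gam p N σ ↔ τ ∈ lifts N σ ∧ τ.IsChain (edge p) :=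
  Finset.mem_filter

lemma pword_cons {a : ℕ} {l : List ℕ} (h : l ≠ []) :
    pword p (a :: l) = p a (l.headD 0) * pword p l := by
  cases l with
  | nil => exact absurd rfl h
  | cons b t => rfl

lemma pword_nonneg {S : Set ℕ} (h : ∀ i ∈ S, ∀ j ∈ S, 0 ≤ p i j) :
    ∀ σ : List ℕ, (∀ x ∈ σ, x ∈ S) → 0 ≤ pword p σ
  | [], _ | [_], _ => zero_le_one
  | a :: b :: t, hσ => mul_nonneg (h a (hσ a (by simp)) b (hσ b (by simp)))
      (pword_nonneg h (b :: t) fun x hx => hσ x (List.mem_cons_of_mem a hx))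

lemma filter_Gam_cons_headD_eq {a i : ℕ} {σ : List ℕ} (ha : a = i ∨ a = i + N) (hσ : σ ≠ []) :
    (Gam p N (i :: σ)).filter (·.headD 0 = a) =
      ((Gam p N σ).filter fun τ => edge p a (τ.headD 0)).image (a :: ·) := by
  ext τ
  simp only [Finset.mem_filter, Finset.mem_image, mem_Gam, mem_lifts_cons]
  constructor
  · rintro ⟨⟨⟨l, hl, hτ⟩, hc⟩, rfl⟩
    obtain ⟨b, l, rfl⟩ := List.exists_cons_of_ne_nil (ne_nil_of_mem_lifts hσ hl)
    rcases hτ with rfl | rfl <;>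
      exact ⟨b :: l, ⟨⟨hl, (List.isChain_cons_cons.1 hc).2⟩, (List.isChain_cons_cons.1 hc).1⟩, rfl⟩
  · rintro ⟨l, ⟨⟨hl, hc⟩, he⟩, rfl⟩
    obtain ⟨b, l, rfl⟩ := List.exists_cons_of_ne_nil (ne_nil_of_mem_lifts hσ hl)
    exact ⟨⟨⟨b :: l, hl, by rcases ha with rfl | rfl <;> simp⟩,
      List.isChain_cons_cons.2 ⟨he, hc⟩⟩, rfl⟩

-- The weights `F(σ)` and `G(σ)` above are `headWeight p N j σ` and `headWeight p N (j + N) σ`.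
variable (p N) in
def headWeight (a : ℕ) (σ : List ℕ) : ℝ :=
  ∑ τ ∈ (Gam p N σ).filter (·.headD 0 = a), pword p τ

lemma headWeight_nonneg (hp0 : ∀ i j, 0 ≤ p i j) (a : ℕ) (σ : List ℕ) :
    0 ≤ headWeight p N a σ :=
  Finset.sum_nonneg fun τ _ => pword_nonneg (S := Set.univ) (fun i _ j _ => hp0 i j) τ
    fun _ _ => trivial

lemma headWeight_cons (hp0 : ∀ i j, 0 ≤ p i j) {a i : ℕ} {σ : List ℕ} (ha : a = i ∨ a = i + N)
    (hσ : σ ≠ []) :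
    headWeight p N a (i :: σ) = ∑ τ ∈ Gam p N σ, p a (τ.headD 0) * pword p τ := by
  rw [headWeight, filter_Gam_cons_headD_eq ha hσ, Finset.sum_image (by simp), Finset.sum_filter]
  refine Finset.sum_congr rfl fun τ hτ => ?_
  rw [pword_cons (ne_nil_of_mem_lifts hσ (mem_Gam.1 hτ).1)]
  split_ifs with he
  · rfl
  · rw [le_antisymm (not_lt.1 he) (hp0 _ _), zero_mul]

lemma sum_Gam_cons_eq (hN : N ≠ 0) (f : ℕ → ℝ) (j : ℕ) (t : List ℕ) :
    ∑ τ ∈ Gam p N (j :: t), f (τ.headD 0) * pword p τ =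
      f j * headWeight p N j (j :: t) + f (j + N) * headWeight p N (j + N) (j :: t) := by
  rw [← Finset.sum_filter_add_sum_filter_not _ (·.headD 0 = j), headWeight, headWeight,
    Finset.mul_sum, Finset.mul_sum]
  congr 1
  · exact Finset.sum_congr rfl fun τ hτ => by rw [(Finset.mem_filter.1 hτ).2]
  · refine Finset.sum_congr (Finset.filter_congr fun τ hτ => ?_) fun τ hτ => by
      rw [(Finset.mem_filter.1 hτ).2]
    rcases mem_lifts_cons.1 (mem_Gam.1 hτ).1 with ⟨l, -, rfl | rfl⟩ <;> simp [hN]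

lemma headWeight_cons_cons (hp0 : ∀ i j, 0 ≤ p i j) (hN : N ≠ 0) {a i j : ℕ} (t : List ℕ)
    (ha : a = i ∨ a = i + N) :
    headWeight p N a (i :: j :: t) =
      p a j * headWeight p N j (j :: t) + p a (j + N) * headWeight p N (j + N) (j :: t) := by
  rw [headWeight_cons hp0 ha (List.cons_ne_nil _ _), sum_Gam_cons_eq hN]

lemma headWeight_singleton {a j : ℕ} (ha : a = j ∨ a = j + N) : headWeight p N a [j] = 1 := by
  have : (Gam p N [j]).filter (·.headD 0 = a) = {[a]} := by
    ext τ
    have hnil : lifts N [] = {[]} := rfl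
    simp only [Finset.mem_filter, mem_Gam, mem_lifts_cons, hnil, Finset.mem_singleton,
      exists_eq_left]
    constructor
    · rintro ⟨⟨rfl | rfl, -⟩, rfl⟩ <;> rfl
    · rintro rfl
      exact ⟨⟨by rcases ha with rfl | rfl <;> simp, List.isChain_singleton _⟩, rfl⟩
  rw [headWeight, this, Finset.sum_singleton]
  rfl

end Words

section LiftsUnderA3

variable {p : ℕ → ℕ → ℝ} {N : ℕ}

lemma A3.pos_of_pos (hA3 : A3 p N) {i j : ℕ} (hi : i ∈ Finset.Icc 1 N) (hj : j ∈ Finset.Icc 1 N)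
    (h : 0 < p i j) : 0 < p i (j + N) ∧ p (i + N) j = 0 ∧ 0 < p (i + N) (j + N) :=
  ((hA3 i hi j hj).resolve_left fun h0 => h.ne' h0.1).2

lemma A3.pos_of_pos_lift (hA3 : A3 p N) {i j i' j' : ℕ} (hi : i ∈ Finset.Icc 1 N)
    (hj : j ∈ Finset.Icc 1 N) (hi' : i' = i ∨ i' = i + N) (hj' : j' = j ∨ j' = j + N)
    (h : 0 < p i' j') : 0 < p i j := by
  rcases hA3 i hi j hj with ⟨h1, h2, h3, h4⟩ | h
  · rcases hi' with rfl | rfl <;> rcases hj' with rfl | rfl <;> simp_all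
  · exact h.1

lemma isChain_of_mem_lifts (hA3 : A3 p N) :
    ∀ σ : List ℕ, (∀ x ∈ σ, x ∈ Finset.Icc 1 N) →
      ∀ τ ∈ lifts N σ, τ.IsChain (edge p) → σ.IsChain (edge p)
  | [], _, _, _, _ => List.isChain_nil
  | [a], _, _, _, _ => List.isChain_singleton a
  | a :: b :: t, hσ, τ, hτ, hc => by
    obtain ⟨l, hl, hτl⟩ := mem_lifts_cons.1 hτ
    obtain ⟨b', l', hb', rfl⟩ : ∃ b' l', (b' = b ∨ b' = b + N) ∧ l = b' :: l' := by
      rcases mem_lifts_cons.1 hl with ⟨l', -, rfl | rfl⟩ <;> simp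
    obtain ⟨a', ha', rfl⟩ : ∃ a', (a' = a ∨ a' = a + N) ∧ τ = a' :: b' :: l' := by
      rcases hτl with rfl | rfl <;> simp
    rw [List.isChain_cons_cons] at hc
    exact List.isChain_cons_cons.2
      ⟨hA3.pos_of_pos_lift (hσ a (by simp)) (hσ b (by simp)) ha' hb' hc.1,
        isChain_of_mem_lifts hA3 (b :: t) (fun x hx => hσ x (List.mem_cons_of_mem a hx)) _ hl
          hc.2⟩

lemma isSword_iff_isH1word (hA3 : A3 p N) {σ : List ℕ} : isSword p N σ ↔ isH1word p N σ := by
  constructor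
  · rintro ⟨⟨hne, hσ⟩, τ, hτ⟩
    exact ⟨hne, hσ, isChain_of_mem_lifts hA3 σ hσ τ (mem_Gam.1 hτ).1 (mem_Gam.1 hτ).2⟩
  · rintro ⟨hne, hσ, hc⟩
    exact ⟨⟨hne, hσ⟩, σ, mem_Gam.2 ⟨self_mem_lifts σ, hc⟩⟩

lemma isH1word_singleton {j : ℕ} (hj : j ∈ Finset.Icc 1 N) : isH1word p N [j] :=
  ⟨List.cons_ne_nil _ _, by simpa using hj, List.isChain_singleton j⟩

lemma isH1word.cons {i j : ℕ} {t : List ℕ} (h : isH1word p N (j :: t))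
    (hi : i ∈ Finset.Icc 1 N) (hij : 0 < p i j) : isH1word p N (i :: j :: t) :=
  ⟨List.cons_ne_nil _ _, List.forall_mem_cons.2 ⟨hi, h.2.1⟩, List.isChain_cons_cons.2 ⟨hij, h.2.2⟩⟩

lemma isH1word.tail {i j : ℕ} {t : List ℕ} (h : isH1word p N (i :: j :: t)) :
    isH1word p N (j :: t) :=
  ⟨List.cons_ne_nil _ _, fun x hx => h.2.1 x (List.mem_cons_of_mem i hx),
    (List.isChain_cons_cons.1 h.2.2).2⟩

lemma isSword_pair_iff (hA3 : A3 p N) {i j : ℕ} (hi : i ∈ Finset.Icc 1 N)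
    (hj : j ∈ Finset.Icc 1 N) : isSword p N [i, j] ↔ 0 < p i j := by
  rw [isSword_iff_isH1word hA3]
  exact ⟨fun h => (List.isChain_pair (R := edge p)).1 h.2.2, (isH1word_singleton hj).cons hi⟩

end LiftsUnderA3

section Weights

variable {p : ℕ → ℕ → ℝ} {N : ℕ}

lemma A3.plus_left_eq_zero (hA3 : A3 p N) {i j : ℕ} (hi : i ∈ Finset.Icc 1 N)
    (hj : j ∈ Finset.Icc 1 N) : p (i + N) j = 0 := by
  rcases hA3 i hi j hj with h | h
  exacts [h.2.2.1, h.2.2.1]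

lemma mem_Icc_two_mul {j : ℕ} (hj : j ∈ Finset.Icc 1 N) :
    j ∈ Finset.Icc 1 (2 * N) ∧ j + N ∈ Finset.Icc 1 (2 * N) := by
  simp only [Finset.mem_Icc] at hj ⊢
  omega

lemma sum_add_plus_eq_one
    (hpsum : ∀ i ∈ Finset.Icc 1 (2 * N), ∑ j ∈ Finset.Icc 1 (2 * N), p i j = 1) {k : ℕ} (hk : k ∈ Finset.Icc 1 N) : ∑ l ∈ Finset.Icc 1 N, (p k l + p k (l + N)) = 1 := by
  rw [Finset.sum_add_distrib, ← sum_Icc_one_two_mul, hpsum k (mem_Icc_two_mul hk).1]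

lemma sum_plus_plus_eq_one (hA3 : A3 p N)
    (hpsum : ∀ i ∈ Finset.Icc 1 (2 * N), ∑ j ∈ Finset.Icc 1 (2 * N), p i j = 1)
    {k : ℕ} (hk : k ∈ Finset.Icc 1 N) : ∑ l ∈ Finset.Icc 1 N, p (k + N) (l + N) = 1 := by
  have h := hpsum (k + N) (mem_Icc_two_mul hk).2
  rwa [sum_Icc_one_two_mul, Finset.sum_eq_zero fun l hl => hA3.plus_left_eq_zero hk hl,
    zero_add] at h

lemma muJ_cons (hN : N ≠ 0) (χ : ℕ → ℝ) (j : ℕ) (t : List ℕ) :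
    muJ p χ N (j :: t) =
      χ j * headWeight p N j (j :: t) + χ (j + N) * headWeight p N (j + N) (j :: t) :=
  sum_Gam_cons_eq hN χ j t

lemma muJ_cons_nonneg (hp0 : ∀ i j, 0 ≤ p i j) (hN : N ≠ 0) {χ : ℕ → ℝ} {j : ℕ}
    (hχj : 0 ≤ χ j) (hχjN : 0 ≤ χ (j + N)) (t : List ℕ) : 0 ≤ muJ p χ N (j :: t) := by
  rw [muJ_cons hN]
  exact add_nonneg (mul_nonneg hχj (headWeight_nonneg hp0 _ _))
    (mul_nonneg hχjN (headWeight_nonneg hp0 _ _))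

lemma headWeight_plus_cons_cons (hp0 : ∀ i j, 0 ≤ p i j) (hN : N ≠ 0) (hA3 : A3 p N) {i j : ℕ}
    (hi : i ∈ Finset.Icc 1 N) (hj : j ∈ Finset.Icc 1 N) (t : List ℕ) :
    headWeight p N (i + N) (i :: j :: t) = p (i + N) (j + N) * headWeight p N (j + N) (j :: t) := by
  rw [headWeight_cons_cons hp0 hN t (Or.inr rfl), hA3.plus_left_eq_zero hi hj, zero_mul, zero_add]

variable (p N) in
def headWeightsAgree (j : ℕ) : Prop :=
  ∀ t, isH1word p N (j :: t) → headWeight p N j (j :: t) = headWeight p N (j + N) (j :: t)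

lemma headWeightsAgree.lumpable_at (hp0 : ∀ i j, 0 ≤ p i j) (hN : N ≠ 0) (hA3 : A3 p N)
    {i j : ℕ} (h : headWeightsAgree p N i) (hi : i ∈ Finset.Icc 1 N) (hj : j ∈ Finset.Icc 1 N)
    (hij : 0 < p i j) : p i j + p i (j + N) = p (i + N) (j + N) := by
  have h := h [j] ((isH1word_singleton hj).cons hi hij)
  rwa [headWeight_cons_cons hp0 hN [] (Or.inl rfl), headWeight_plus_cons_cons hp0 hN hA3 hi hj,
    headWeight_singleton (Or.inl rfl), headWeight_singleton (Or.inr rfl), mul_one, mul_one,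
    mul_one] at h

lemma headWeightsAgree.of_edge (hp0 : ∀ i j, 0 ≤ p i j) (hN : N ≠ 0) (hA3 : A3 p N)
    {i j : ℕ} (h : headWeightsAgree p N i) (hi : i ∈ Finset.Icc 1 N) (hj : j ∈ Finset.Icc 1 N)
    (hij : 0 < p i j) : headWeightsAgree p N j := by
  intro t ht
  have hlump := h.lumpable_at hp0 hN hA3 hi hj hij
  have h := h (j :: t) (ht.cons hi hij)
  rw [headWeight_cons_cons hp0 hN t (Or.inl rfl), headWeight_plus_cons_cons hp0 hN hA3 hi hj,
    ← hlump] at h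
  exact mul_left_cancel₀ hij.ne' (by linarith)

end Weights

section Markov

variable {p : ℕ → ℕ → ℝ} {N : ℕ}

variable (p N) in
/-- Lumpability of `P` with respect to the pairs `{i, i⁺}`, in the form it takes under (A3):
there `p_{i⁺,j} = 0`, and all four entries vanish off the edges of `P₁`. -/
def IsLumpable : Prop :=
  ∀ i ∈ Finset.Icc 1 N, ∀ j ∈ Finset.Icc 1 N, 0 < p i j → p i j + p i (j + N) = p (i + N) (j + N)

/-- Writing `F, G` for the two head weights of `j :: t`, the Markov property of the cylinder
values forces `A * F = B * G` with constants `A, B`, and `t = []` gives `A = B`. -/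
lemma headWeightsAgree_or_of_markov (hp0 : ∀ i j, 0 ≤ p i j) (hN : N ≠ 0) (hA3 : A3 p N)
    {χ χt : ℕ → ℝ} {pt : ℕ → ℕ → ℝ} (hχpos : ∀ i ∈ Finset.Icc 1 (2 * N), 0 < χ i)
    (hmarkov : ∀ σ, isH1word p N σ → muJ p χ N σ = χt (σ.headD 0) * pword pt σ)
    {i j : ℕ} (hi : i ∈ Finset.Icc 1 N) (hj : j ∈ Finset.Icc 1 N) (hij : 0 < p i j) :
    headWeightsAgree p N j ∨
      χ i * p i j * χ (j + N) = χ j * (χ i * p i (j + N) + χ (i + N) * p (i + N) (j + N)) := by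
  have hχt : χt j = χ j + χ (j + N) := by
    have h := hmarkov [j] (isH1word_singleton hj)
    rw [muJ_cons hN, headWeight_singleton (Or.inl rfl), headWeight_singleton (Or.inr rfl)] at h
    simpa [pword] using h.symm
  set A := χt j * (χ i * p i j) - χt i * pt i j * χ j with hAdef
  set B := χt i * pt i j * χ (j + N) - χt j * (χ i * p i (j + N) + χ (i + N) * p (i + N) (j + N))
    with hBdef
  have key : ∀ t, isH1word p N (j :: t) →
      A * headWeight p N j (j :: t) = B * headWeight p N (j + N) (j :: t) := by
    intro t ht
    have e1 := hmarkov _ (ht.cons hi hij)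
    have e2 := hmarkov _ ht
    rw [muJ_cons hN, headWeight_cons_cons hp0 hN t (Or.inl rfl),
      headWeight_plus_cons_cons hp0 hN hA3 hi hj] at e1
    rw [muJ_cons hN] at e2
    have hpt : pword pt (i :: j :: t) = pt i j * pword pt (j :: t) := rfl
    simp only [List.headD_cons, hpt] at e1 e2
    linear_combination χt j * e1 - χt i * pt i j * e2
  have hAB : A = B := by
    simpa [headWeight_singleton] using key [] (isH1word_singleton hj)
  by_cases hA : A = 0
  · right
    have hχtj : χt j ≠ 0 := by
      rw [hχt]
      exact (add_pos (hχpos j (mem_Icc_two_mul hj).1) (hχpos _ (mem_Icc_two_mul hj).2)).ne'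
    have hB : B = 0 := hAB ▸ hA
    refine mul_left_cancel₀ hχtj ?_
    linear_combination χ (j + N) * (hA - hAdef) + χ j * (hB - hBdef)
  · left
    intro t ht
    exact mul_left_cancel₀ hA (by rw [key t ht, hAB])

lemma exists_pos_plus (hp0 : ∀ i j, 0 ≤ p i j) (hA3 : A3 p N) {k : ℕ} (hk : k ∈ Finset.Icc 1 N)
    (hrow : ∑ l ∈ Finset.Icc 1 N, (p k l + p k (l + N)) = 1) :
    ∃ l ∈ Finset.Icc 1 N, 0 < p k (l + N) := by
  obtain ⟨l, hl, hpos⟩ := Finset.exists_lt_of_sum_lt (f := fun _ => (0 : ℝ))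
    (by rw [hrow, Finset.sum_const_zero]; exact one_pos)
  refine ⟨l, hl, ?_⟩
  rcases (hp0 k l).lt_or_eq with h | h
  · exact (hA3.pos_of_pos hk hl h).1
  · linarith

lemma exists_edge_nondegenerate (hp0 : ∀ i j, 0 ≤ p i j) (hN : N ≠ 0) (hA3 : A3 p N) {χ : ℕ → ℝ}
    (hχpos : ∀ i ∈ Finset.Icc 1 (2 * N), 0 < χ i)
    (hrow₁ : ∀ k ∈ Finset.Icc 1 N, ∑ l ∈ Finset.Icc 1 N, (p k l + p k (l + N)) = 1)
    (hrow₂ : ∀ k ∈ Finset.Icc 1 N, ∑ l ∈ Finset.Icc 1 N, p (k + N) (l + N) = 1) :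
    ∃ k ∈ Finset.Icc 1 N, ∃ l ∈ Finset.Icc 1 N, 0 < p k l ∧
      χ k * p k l * χ (l + N) ≠ χ l * (χ k * p k (l + N) + χ (k + N) * p (k + N) (l + N)) := by
  by_contra! hrel
  have hχ : ∀ k ∈ Finset.Icc 1 N, 0 < χ k ∧ 0 < χ (k + N) := fun k hk =>
    ⟨hχpos k (mem_Icc_two_mul hk).1, hχpos _ (mem_Icc_two_mul hk).2⟩
  set v : ℕ → ℝ := fun k => 1 + χ (k + N) / χ k
  have hterm : ∀ k ∈ Finset.Icc 1 N, ∀ l ∈ Finset.Icc 1 N,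
      p k l * v l = p k l + p k (l + N) + χ (k + N) / χ k * p (k + N) (l + N) := by
    intro k hk l hl
    have := (hχ k hk).1.ne'
    have := (hχ l hl).1.ne'
    rcases (hp0 k l).lt_or_eq with h | h
    · simp only [v]
      field_simp
      linear_combination hrel k hk l hl h
    · obtain ⟨h1, h2, -, h4⟩ := (hA3 k hk l hl).resolve_right fun h' => h'.1.ne' h.symm
      simp [h1, h2, h4]
  have hfix : ∀ k ∈ Finset.Icc 1 N, ∑ l ∈ Finset.Icc 1 N, p k l * v l = v k := by
    intro k hk
    rw [Finset.sum_congr rfl (hterm k hk), Finset.sum_add_distrib, hrow₁ k hk, ← Finset.mul_sum,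
      hrow₂ k hk, mul_one]
  have hsub : ∀ k ∈ Finset.Icc 1 N, ∑ l ∈ Finset.Icc 1 N, p k l < 1 := by
    intro k hk
    obtain ⟨l, hl, hpos⟩ := exists_pos_plus hp0 hA3 hk (hrow₁ k hk)
    have := hrow₁ k hk
    rw [Finset.sum_add_distrib] at this
    linarith [Finset.single_le_sum (fun l _ => hp0 k (l + N)) hl]
  obtain ⟨k, hk, hlt⟩ := exists_sum_mul_lt_of_forall_sum_lt_one
    ⟨1, Finset.mem_Icc.2 ⟨le_rfl, Nat.one_le_iff_ne_zero.2 hN⟩⟩ (fun k _ l _ => hp0 k l)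
    hsub fun k hk => add_pos one_pos (div_pos (hχ k hk).2 (hχ k hk).1)
  exact (hfix k hk ▸ hlt).false

lemma isLumpable_of_markov (hp0 : ∀ i j, 0 ≤ p i j) (hN : N ≠ 0) (hA3 : A3 p N)
    (hirr : irreducibleOn p (Finset.Icc 1 N)) {χ χt : ℕ → ℝ} {pt : ℕ → ℕ → ℝ}
    (hχpos : ∀ i ∈ Finset.Icc 1 (2 * N), 0 < χ i)
    (hrow₁ : ∀ k ∈ Finset.Icc 1 N, ∑ l ∈ Finset.Icc 1 N, (p k l + p k (l + N)) = 1)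
    (hrow₂ : ∀ k ∈ Finset.Icc 1 N, ∑ l ∈ Finset.Icc 1 N, p (k + N) (l + N) = 1)
    (hmarkov : ∀ σ, isH1word p N σ → muJ p χ N σ = χt (σ.headD 0) * pword pt σ) :
    IsLumpable p N := by
  obtain ⟨k, hk, l, hl, hkl, hne⟩ := exists_edge_nondegenerate hp0 hN hA3 hχpos hrow₁ hrow₂
  have hagree : headWeightsAgree p N l :=
    (headWeightsAgree_or_of_markov hp0 hN hA3 hχpos hmarkov hk hl hkl).resolve_right hne
  have hall := hirr.forall_of_edge_imp (fun i hi j hj hij h => h.of_edge hp0 hN hA3 hi hj hij)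
    hl hagree
  exact fun i hi j hj hij => (hall i hi).lumpable_at hp0 hN hA3 hi hj hij

lemma headWeight_eq_pword_of_isLumpable (hp0 : ∀ i j, 0 ≤ p i j) (hN : N ≠ 0) (hA3 : A3 p N)
    (hlump : IsLumpable p N) :
    ∀ (t : List ℕ) (j : ℕ), isH1word p N (j :: t) →
      headWeight p N j (j :: t) = pword (fun a b => p (a + N) (b + N)) (j :: t) ∧
        headWeight p N (j + N) (j :: t) = pword (fun a b => p (a + N) (b + N)) (j :: t)
  | [], j, _ => ⟨headWeight_singleton (Or.inl rfl), headWeight_singleton (Or.inr rfl)⟩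
  | l :: t, j, h => by
    have hj := h.2.1 j (by simp)
    have hl := h.2.1 l (by simp)
    have hjl : 0 < p j l := (List.isChain_cons_cons.1 h.2.2).1
    obtain ⟨ihj, ihjN⟩ := headWeight_eq_pword_of_isLumpable hp0 hN hA3 hlump t l h.tail
    have hpw : pword (fun a b => p (a + N) (b + N)) (j :: l :: t) =
        p (j + N) (l + N) * pword (fun a b => p (a + N) (b + N)) (l :: t) := rfl
    rw [headWeight_cons_cons hp0 hN t (Or.inl rfl), headWeight_plus_cons_cons hp0 hN hA3 hj hl,
      ihj, ihjN, hpw, ← hlump j hj l hl hjl]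
    exact ⟨by ring, rfl⟩

end Markov

section Reducibility

variable {p : ℕ → ℕ → ℝ} {N : ℕ} {E : Type*} [MeasurableSpace E] {T : ℕ → ℕ → E → E}
  {J : ℕ → Set E} {μ : Measure E} {χ : ℕ → ℝ}

lemma markov_of_reducible (hp0 : ∀ i j, 0 ≤ p i j) (hN : N ≠ 0) (hA3 : A3 p N)
    (hχpos : ∀ i ∈ Finset.Icc 1 (2 * N), 0 < χ i)
    (hμ : ∀ σ, isSword p N σ → μ (Jword T J σ) = ENNReal.ofReal (muJ p χ N σ))
    (h : reducible p N T J μ) :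
    ∃ (pt : ℕ → ℕ → ℝ) (χt : ℕ → ℝ),
      ∀ σ, isH1word p N σ → muJ p χ N σ = χt (σ.headD 0) * pword pt σ := by
  obtain ⟨pt, χt, hpt0, -, hχt0, -, hcyl⟩ := h
  refine ⟨pt, χt, fun σ hσ => ?_⟩
  obtain ⟨j, t, rfl⟩ := List.exists_cons_of_ne_nil hσ.1
  have hj := hσ.2.1 j (by simp)
  have hs := (isSword_iff_isH1word hA3).2 hσ
  exact (ENNReal.ofReal_eq_ofReal_iff
    (muJ_cons_nonneg hp0 hN (hχpos _ (mem_Icc_two_mul hj).1).le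
      (hχpos _ (mem_Icc_two_mul hj).2).le t)
    (mul_nonneg (hχt0 j hj).le (pword_nonneg (S := ↑(Finset.Icc 1 N)) hpt0 _ hσ.2.1))).1
    ((hμ _ hs).symm.trans (hcyl _ hs))

lemma reducible_of_isLumpable (hp0 : ∀ i j, 0 ≤ p i j) (hN : N ≠ 0) (hA3 : A3 p N)
    (hχpos : ∀ i ∈ Finset.Icc 1 (2 * N), 0 < χ i) (hχsum : ∑ i ∈ Finset.Icc 1 (2 * N), χ i = 1)
    (hrow₂ : ∀ k ∈ Finset.Icc 1 N, ∑ l ∈ Finset.Icc 1 N, p (k + N) (l + N) = 1)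
    (hμ : ∀ σ, isSword p N σ → μ (Jword T J σ) = ENNReal.ofReal (muJ p χ N σ))
    (hlump : IsLumpable p N) : reducible p N T J μ := by
  refine ⟨fun a b => p (a + N) (b + N), fun i => χ i + χ (i + N), fun _ _ _ _ => hp0 _ _, hrow₂,
    fun i hi => add_pos (hχpos _ (mem_Icc_two_mul hi).1) (hχpos _ (mem_Icc_two_mul hi).2),
    by rw [Finset.sum_add_distrib, ← sum_Icc_one_two_mul, hχsum], fun σ hσ => ?_⟩
  obtain ⟨j, t, rfl⟩ := List.exists_cons_of_ne_nil hσ.1.1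
  obtain ⟨hF, hG⟩ := headWeight_eq_pword_of_isLumpable hp0 hN hA3 hlump t j
    ((isSword_iff_isH1word hA3).1 hσ)
  rw [hμ _ hσ, muJ_cons hN, hF, hG, List.headD_cons, add_mul]

end Reducibility

theorem stmt1_general
    (N q : ℕ) (hN : 2 ≤ N)
    (p : ℕ → ℕ → ℝ) (χ : ℕ → ℝ)
    (hp0 : ∀ i j, 0 ≤ p i j)
    (hpsum : ∀ i ∈ Finset.Icc 1 (2 * N), ∑ j ∈ Finset.Icc 1 (2 * N), p i j = 1)
    (hχpos : ∀ i ∈ Finset.Icc 1 (2 * N), 0 < χ i)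
    (hχsum : ∑ i ∈ Finset.Icc 1 (2 * N), χ i = 1)
    (T : ℕ → ℕ → EuclideanSpace ℝ (Fin q) → EuclideanSpace ℝ (Fin q))
    (J : ℕ → Set (EuclideanSpace ℝ (Fin q)))
    (μ : Measure (EuclideanSpace ℝ (Fin q)))
    (hμ : ∀ σ : List ℕ, isSword p N σ →
      μ (Jword T J σ) = ENNReal.ofReal (muJ p χ N σ))
    (hA1 : A1 p N) (hA3 : A3 p N) :
    reducible p N T J μ ↔
      ∀ i ∈ Finset.Icc 1 N, ∀ j ∈ Finset.Icc 1 N, isSword p N [i, j] →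
        p i j + p i (j + N) = p (i + N) (j + N) := by
  have hN0 : N ≠ 0 := by omega
  have hrow₂ := fun k (hk : k ∈ Finset.Icc 1 N) => sum_plus_plus_eq_one hA3 hpsum hk
  have hcond : (∀ i ∈ Finset.Icc 1 N, ∀ j ∈ Finset.Icc 1 N, isSword p N [i, j] →
      p i j + p i (j + N) = p (i + N) (j + N)) ↔ IsLumpable p N :=
    forall₂_congr fun i hi => forall₂_congr fun j hj => by rw [isSword_pair_iff hA3 hi hj]
  rw [hcond]
  constructor
  · intro h
    obtain ⟨pt, χt, hmarkov⟩ := markov_of_reducible hp0 hN0 hA3 hχpos hμ h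
    exact isLumpable_of_markov hp0 hN0 hA3 hA1.1 hχpos (fun k hk => sum_add_plus_eq_one hpsum hk)
      hrow₂ hmarkov
  · exact reducible_of_isLumpable hp0 hN0 hA3 hχpos hχsum hrow₂ hμ

/-- **Theorem (Zhu, Theorem 1.1(2)).** Assume (A1)–(A3). Then `μ` is reducible if and only
if `p_{i,j} + p_{i,j⁺} = p_{i⁺,j⁺}` for every `(i,j) ∈ 𝒮₂`. -/
theorem stmt1
    (N q : ℕ) (hN : 2 ≤ N) (hq : 1 ≤ q) (r : ℝ) (hr : 0 < r)
    (p : ℕ → ℕ → ℝ) (χ : ℕ → ℝ)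
    (hp0 : ∀ i j, 0 ≤ p i j)
    (hpsupp : ∀ i j, 0 < p i j → i ∈ Finset.Icc 1 (2 * N) ∧ j ∈ Finset.Icc 1 (2 * N))
    (hpsum : ∀ i ∈ Finset.Icc 1 (2 * N), ∑ j ∈ Finset.Icc 1 (2 * N), p i j = 1)
    (hχpos : ∀ i ∈ Finset.Icc 1 (2 * N), 0 < χ i)
    (hχsum : ∑ i ∈ Finset.Icc 1 (2 * N), χ i = 1)
    (sr : ℕ → ℕ → ℝ)
    (T : ℕ → ℕ → EuclideanSpace ℝ (Fin q) → EuclideanSpace ℝ (Fin q))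
    (J : ℕ → Set (EuclideanSpace ℝ (Fin q)))
    (hTinv : ∀ i ∈ Finset.Icc 1 N, ∀ j ∈ Finset.Icc 1 N, ∀ a b : ℕ,
      (a = i ∨ a = i + N) → (b = j ∨ b = j + N) → 0 < p a b →
      T a b = T i j ∧ sr a b = sr i j)
    (hsim : ∀ i ∈ Finset.Icc 1 N, ∀ j ∈ Finset.Icc 1 N, isSword p N [i, j] →
      0 < sr i j ∧ sr i j < 1 ∧ ∀ x y, dist (T i j x) (T i j y) = sr i j * dist x y)
    (hJcpt : ∀ i ∈ Finset.Icc 1 N,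
      IsCompact (J i) ∧ (J i).Nonempty ∧ closure (interior (J i)) = J i ∧
        Metric.diam (J i) = 1)
    (hJdisj : ∀ i ∈ Finset.Icc 1 N, ∀ j ∈ Finset.Icc 1 N, i ≠ j → Disjoint (J i) (J j))
    (hJplus : ∀ i ∈ Finset.Icc 1 N, J (i + N) = J i)
    (hnest : ∀ i ∈ Finset.Icc 1 N, ∀ j ∈ Finset.Icc 1 N, isSword p N [i, j] →
      T i j '' J j ⊆ J i)
    (hTdisj : ∀ i ∈ Finset.Icc 1 N, ∀ j ∈ Finset.Icc 1 N, ∀ l ∈ Finset.Icc 1 N,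
      isSword p N [i, j] → isSword p N [i, l] → j ≠ l →
      Disjoint (T i j '' J j) (T i l '' J l))
    (μ : Measure (EuclideanSpace ℝ (Fin q))) [IsProbabilityMeasure μ]
    (hμ : ∀ σ : List ℕ, isSword p N σ →
      μ (Jword T J σ) = ENNReal.ofReal (muJ p χ N σ))
    (hA1 : A1 p N) (hA2 : A2 p N) (hA3 : A3 p N) :
    reducible p N T J μ ↔
      ∀ i ∈ Finset.Icc 1 N, ∀ j ∈ Finset.Icc 1 N, isSword p N [i, j] →
        p i j + p i (j + N) = p (i + N) (j + N) :=
  stmt1_general N q hN p χ hp0 hpsum hχpos hχsum T J μ hμ hA1 hA3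

end MTM

end
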